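/- Let $0 < r < \tfrac12$ and let $K$ be the attractor of the self-similar IFS on $\mathbb{R}^2$ given by $\varphi_1(x) = rx$, $\varphi_2(x) = rx + (1-r, 0)$, $\varphi_3(x) = rx + (0, 1-r)$, $\varphi_4(x) = rx + (1-r, 1-r)$, $\varphi_5(x) = r R_{\pi/4} x + \big(\tfrac12, \tfrac12 - \tfrac{\sqrt2}{2} r\big)$, where $R_{\pi/4}$ is the rotation of $\mathbb{R}^2$ by angle $\pi/4$ about the origin. Then $\pi_W(K) = \pi_W([0,1]^2)$ for every one-dimensional linear subspace $W$ of $\mathbb{R}^2$ if and only if $r \ge 1/3$. -/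

import Mathlib

open Set Module

/-- The point `(a, b)` of the Euclidean plane. -/
noncomputable def mk2 (a b : ℝ) : EuclideanSpace ℝ (Fin 2) := WithLp.toLp 2 ![a, b]

/-- Rotation of the plane by `π/4` about the origin. -/
noncomputable def rot45 (p : EuclideanSpace ℝ (Fin 2)) : EuclideanSpace ℝ (Fin 2) :=
  mk2 ((p 0 - p 1) / Real.sqrt 2) ((p 0 + p 1) / Real.sqrt 2)

/-- Orthogonal projection onto a subspace, viewed as a map of the ambient space. -/
noncomputable def orthProj (W : Submodule ℝ (EuclideanSpace ℝ (Fin 2)))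
    (x : EuclideanSpace ℝ (Fin 2)) : EuclideanSpace ℝ (Fin 2) :=
  (W.orthogonalProjection x : EuclideanSpace ℝ (Fin 2))

/-- The unit square `[0,1]²`. -/
def unitSq : Set (EuclideanSpace ℝ (Fin 2)) := {p | ∀ i, p i ∈ Icc (0 : ℝ) 1}

/-!
The five maps send `[0,1]²` into itself, so `K ⊆ [0,1]²`, and the shadow of a piece `φᵢ(K)` on a
line lies in the shadow of the small square or diamond `φᵢ([0,1]²)`: an interval `r` times as
long as a shadow of `[0,1]²`, in the same direction for the squares and in the direction turned by
`π/4` for the diamond. For `r < 1/3` these five intervals leave a gap in the diagonal direction.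
For `r ≥ 1/3` they cover the shadow of `[0,1]²` in every direction; iterating the covering, every
point of that shadow is within `2 rⁿ` of the shadow of `K`, which is closed.
-/

local notation "ℝ²" => EuclideanSpace ℝ (Fin 2)

theorem subset_closure_of_forall_mem_image_contraction {X ι : Type*} [PseudoMetricSpace X]
    {I A : ι → Set X} {r M : ℝ} (hr0 : 0 ≤ r) (hr1 : r < 1)
    (hbase : ∀ i, ∀ x ∈ I i, ∃ a ∈ A i, dist x a ≤ M)
    (hcover : ∀ i, ∀ x ∈ I i, ∃ j, ∃ f : X → X, (∀ y z, dist (f y) (f z) ≤ r * dist y z) ∧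
      x ∈ f '' I j ∧ MapsTo f (A j) (A i))
    (i : ι) : I i ⊆ closure (A i) := by
  have approx : ∀ n : ℕ, ∀ i, ∀ x ∈ I i, ∃ a ∈ A i, dist x a ≤ M * r ^ n := by
    intro n
    induction n with
    | zero => simpa using hbase
    | succ n ih =>
      intro i x hx
      obtain ⟨j, f, hf, ⟨y, hy, rfl⟩, hmaps⟩ := hcover i x hx
      obtain ⟨a, ha, hya⟩ := ih j y hy
      refine ⟨f a, hmaps ha, (hf y a).trans ?_⟩
      calc r * dist y a ≤ r * (M * r ^ n) := mul_le_mul_of_nonneg_left hya hr0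
        _ = M * r ^ (n + 1) := by ring
  intro x hx
  rw [Metric.mem_closure_iff]
  intro ε hε
  have hlim : Filter.Tendsto (fun n : ℕ => M * r ^ n) Filter.atTop (nhds 0) := by
    simpa using (tendsto_pow_atTop_nhds_zero_of_lt_one hr0 hr1).const_mul M
  obtain ⟨n, hn⟩ := (hlim.eventually (gt_mem_nhds hε)).exists
  obtain ⟨a, ha, hxa⟩ := approx n i x hx
  exact ⟨a, ha, hxa.trans_lt hn⟩

lemma sqrt_two_le_two : √2 ≤ 2 := by
  rw [Real.sqrt_le_left zero_le_two]; norm_num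

lemma abs_sub_half_le_half_iff {x : ℝ} : |x - 1 / 2| ≤ 1 / 2 ↔ x ∈ Icc (0 : ℝ) 1 := by
  rw [abs_le, mem_Icc]
  constructor <;> rintro ⟨h0, h1⟩ <;> constructor <;> linarith

lemma one_sub_mem_pair {a : ℝ} (ha : a ∈ ({0, 1} : Set ℝ)) : 1 - a ∈ ({0, 1} : Set ℝ) := by
  rcases ha with rfl | rfl <;> norm_num

lemma pair_subset_Icc : ({0, 1} : Set ℝ) ⊆ Icc 0 1 := by
  rintro _ (rfl | rfl) <;> norm_num

lemma dist_affine {r : ℝ} (hr : 0 ≤ r) (m m' y z : ℝ) :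
    dist (m + r * (y - m')) (m + r * (z - m')) = r * dist y z := by
  rw [Real.dist_eq, Real.dist_eq, show m + r * (y - m') - (m + r * (z - m')) = r * (y - z) by ring,
    abs_mul, abs_of_nonneg hr]

lemma mem_image_affine_closedBall {r m m' ρ t : ℝ} (hr : 0 < r) (ht : |t - m| ≤ r * ρ) :
    t ∈ (fun τ => m + r * (τ - m')) '' Metric.closedBall m' ρ := by
  refine ⟨m' + (t - m) / r, ?_, by field_simp; ring⟩
  rw [Metric.mem_closedBall, Real.dist_eq, add_sub_cancel_left, abs_div, abs_of_pos hr,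
    div_le_iff₀ hr]
  linarith

@[simp] lemma mk2_apply_zero (a b : ℝ) : mk2 a b 0 = a := rfl
@[simp] lemma mk2_apply_one (a b : ℝ) : mk2 a b 1 = b := rfl

lemma inner_eq_fin_two (v p : ℝ²) : inner ℝ v p = v 0 * p 0 + v 1 * p 1 := by
  simp [PiLp.inner_apply, Fin.sum_univ_two, mul_comm]

noncomputable def sqCenter : ℝ² := mk2 (1 / 2) (1 / 2)

noncomputable def shadowRadius (v : ℝ²) : ℝ := (|v 0| + |v 1|) / 2

noncomputable def rot45Adjoint (v : ℝ²) : ℝ² := mk2 ((v 0 + v 1) / √2) ((v 1 - v 0) / √2)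

noncomputable def cornerMap (r a b : ℝ) (p : ℝ²) : ℝ² := r • p + mk2 ((1 - r) * a) ((1 - r) * b)

noncomputable def rotMap (r : ℝ) (p : ℝ²) : ℝ² :=
  r • rot45 p + mk2 (1 / 2) (1 / 2 - (√2 / 2) * r)

def hutchinson (r : ℝ) (K : Set ℝ²) : Set ℝ² :=
  (⋃ b ∈ ({0, 1} : Set ℝ), ⋃ a ∈ ({0, 1} : Set ℝ), cornerMap r a b '' K) ∪ rotMap r '' K

lemma abs_inner_sub_inner_sqCenter_le {p : ℝ²} (hp : p ∈ unitSq) (v : ℝ²) :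
    |inner ℝ v p - inner ℝ v sqCenter| ≤ shadowRadius v := by
  have h : inner ℝ v p - inner ℝ v sqCenter = v 0 * (p 0 - 1 / 2) + v 1 * (p 1 - 1 / 2) := by
    simp only [inner_eq_fin_two, sqCenter, mk2_apply_zero, mk2_apply_one]; ring
  rw [h, shadowRadius]
  calc |v 0 * (p 0 - 1 / 2) + v 1 * (p 1 - 1 / 2)|
      ≤ |v 0| * |p 0 - 1 / 2| + |v 1| * |p 1 - 1 / 2| := by
        simpa only [abs_mul] using abs_add_le (v 0 * (p 0 - 1 / 2)) (v 1 * (p 1 - 1 / 2))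
    _ ≤ |v 0| * (1 / 2) + |v 1| * (1 / 2) := by
        gcongr <;> exact abs_sub_half_le_half_iff.2 (hp _)
    _ = (|v 0| + |v 1|) / 2 := by ring

lemma shadowRadius_le_one {v : ℝ²} (hv : ‖v‖ = 1) : shadowRadius v ≤ 1 := by
  have h0 := PiLp.norm_apply_le v 0
  have h1 := PiLp.norm_apply_le v 1
  rw [Real.norm_eq_abs, hv] at h0 h1
  rw [shadowRadius]
  linarith

lemma max_abs_le_shadowRadius_rot45Adjoint (v : ℝ²) :
    max |v 0| |v 1| / 2 ≤ shadowRadius (rot45Adjoint v) := by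
  have hpos : 0 < √2 := by positivity
  have h0 : 2 * |v 0| ≤ |v 0 + v 1| + |v 1 - v 0| := by
    have := abs_sub (v 0 + v 1) (v 1 - v 0)
    rwa [show v 0 + v 1 - (v 1 - v 0) = 2 * v 0 by ring, abs_mul, abs_two] at this
  have h1 : 2 * |v 1| ≤ |v 0 + v 1| + |v 1 - v 0| := by
    have := abs_add_le (v 0 + v 1) (v 1 - v 0)
    rwa [show v 0 + v 1 + (v 1 - v 0) = 2 * v 1 by ring, abs_mul, abs_two] at this
  rw [shadowRadius, rot45Adjoint, mk2_apply_zero, mk2_apply_one, abs_div, abs_div,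
    abs_of_pos hpos, ← add_div, div_le_div_iff_of_pos_right two_pos, le_div_iff₀ hpos]
  rcases le_total |v 0| |v 1| with h | h
  · rw [max_eq_right h]; nlinarith [abs_nonneg (v 1), sqrt_two_le_two]
  · rw [max_eq_left h]; nlinarith [abs_nonneg (v 0), sqrt_two_le_two]

lemma inner_cornerMap_sub (v : ℝ²) (r a b : ℝ) (p : ℝ²) :
    inner ℝ v (cornerMap r a b p) - inner ℝ v sqCenter =
      r * (inner ℝ v p - inner ℝ v sqCenter) + (1 - r) * (v 0 * (a - 1 / 2) + v 1 * (b - 1 / 2)) := by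
  simp only [inner_eq_fin_two, cornerMap, sqCenter, PiLp.add_apply, PiLp.smul_apply, smul_eq_mul,
    mk2_apply_zero, mk2_apply_one]
  ring

lemma inner_rotMap_sub (v : ℝ²) (r : ℝ) (p : ℝ²) :
    inner ℝ v (rotMap r p) - inner ℝ v sqCenter =
      r * (inner ℝ (rot45Adjoint v) p - inner ℝ (rot45Adjoint v) sqCenter) := by
  simp only [inner_eq_fin_two, rotMap, rot45, rot45Adjoint, sqCenter, PiLp.add_apply,
    PiLp.smul_apply, smul_eq_mul, mk2_apply_zero, mk2_apply_one]
  field_simp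
  linear_combination (-(v 1 * r)) * Real.mul_self_sqrt zero_le_two

lemma norm_rot45 (p : ℝ²) : ‖rot45 p‖ = ‖p‖ := by
  simp only [EuclideanSpace.norm_eq, Fin.sum_univ_two, Real.norm_eq_abs, sq_abs, rot45,
    mk2_apply_zero, mk2_apply_one]
  congr 1
  simp only [div_pow, Real.sq_sqrt zero_le_two]
  ring

lemma norm_rot45Adjoint (v : ℝ²) : ‖rot45Adjoint v‖ = ‖v‖ := by
  simp only [EuclideanSpace.norm_eq, Fin.sum_univ_two, Real.norm_eq_abs, sq_abs, rot45Adjoint,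
    mk2_apply_zero, mk2_apply_one]
  congr 1
  simp only [div_pow, Real.sq_sqrt zero_le_two]
  ring

lemma rot45_sub (p q : ℝ²) : rot45 p - rot45 q = rot45 (p - q) := by
  ext i
  fin_cases i <;> simp [rot45] <;> ring

lemma dist_rot45 (p q : ℝ²) : dist (rot45 p) (rot45 q) = dist p q := by
  rw [dist_eq_norm, dist_eq_norm, rot45_sub, norm_rot45]

lemma dist_cornerMap {r : ℝ} (hr : 0 ≤ r) (a b : ℝ) (p q : ℝ²) :
    dist (cornerMap r a b p) (cornerMap r a b q) = r * dist p q := by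
  rw [cornerMap, cornerMap, dist_add_right, dist_smul₀, Real.norm_of_nonneg hr]

lemma dist_rotMap {r : ℝ} (hr : 0 ≤ r) (p q : ℝ²) :
    dist (rotMap r p) (rotMap r q) = r * dist p q := by
  rw [rotMap, rotMap, dist_add_right, dist_smul₀, Real.norm_of_nonneg hr, dist_rot45]

lemma isClosed_unitSq : IsClosed unitSq := by
  simp only [unitSq, ofPred_forall]
  exact isClosed_iInter fun i => isClosed_Icc.preimage (EuclideanSpace.proj i).continuous

lemma zero_mem_unitSq : (0 : ℝ²) ∈ unitSq := fun _ => by simp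

lemma convex_unitSq : Convex ℝ unitSq := by
  intro p hp q hq a b ha hb hab i
  simp only [PiLp.add_apply, PiLp.smul_apply, smul_eq_mul]
  obtain ⟨hp0, hp1⟩ := hp i
  obtain ⟨hq0, hq1⟩ := hq i
  constructor <;> nlinarith

lemma mapsTo_cornerMap {r a b : ℝ} (hr0 : 0 ≤ r) (hr1 : r ≤ 1) (ha : a ∈ Icc (0 : ℝ) 1)
    (hb : b ∈ Icc (0 : ℝ) 1) : MapsTo (cornerMap r a b) unitSq unitSq := by
  intro p hp
  have hab : mk2 a b ∈ unitSq := by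
    intro i; fin_cases i <;> simpa
  convert convex_unitSq hp hab hr0 (sub_nonneg.2 hr1) (by ring) using 1
  ext i; fin_cases i <;> simp [cornerMap]

lemma mapsTo_rotMap {r : ℝ} (hr0 : 0 ≤ r) (hr : r ≤ 1 / 2) : MapsTo (rotMap r) unitSq unitSq := by
  intro p hp
  have hc : 0 ≤ r / √2 ∧ r / √2 ≤ 1 / 2 :=
    ⟨by positivity, (div_le_self hr0 Real.one_lt_sqrt_two.le).trans hr⟩
  obtain ⟨hp0, hp1⟩ := hp 0
  obtain ⟨hq0, hq1⟩ := hp 1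
  have bound : ∀ δ : ℝ, |δ| ≤ 1 → r / √2 * δ + 1 / 2 ∈ Icc (0 : ℝ) 1 := by
    intro δ hδ
    rw [← abs_sub_half_le_half_iff, add_sub_cancel_right, abs_mul, abs_of_nonneg hc.1]
    nlinarith [abs_nonneg δ]
  intro i
  fin_cases i
  · convert bound (p 0 - p 1) (abs_le.2 ⟨by linarith, by linarith⟩) using 1
    simp [rotMap, rot45]; ring
  · convert bound (p 0 + p 1 - 1) (abs_le.2 ⟨by linarith, by linarith⟩) using 1
    simp [rotMap, rot45]
    field_simp
    linear_combination (-r) * Real.mul_self_sqrt zero_le_two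

lemma mem_hutchinson {r : ℝ} {K : Set ℝ²} {x : ℝ²} :
    x ∈ hutchinson r K ↔ (∃ b ∈ ({0, 1} : Set ℝ), ∃ a ∈ ({0, 1} : Set ℝ), ∃ y ∈ K,
      cornerMap r a b y = x) ∨ ∃ y ∈ K, rotMap r y = x := by
  simp only [hutchinson, mem_union, mem_iUnion₂, mem_image, exists_prop]

lemma hutchinson_eq (r : ℝ) (K : Set ℝ²) :
    hutchinson r K =
      ((fun p => r • p) '' K) ∪
      ((fun p => r • p + mk2 (1 - r) 0) '' K) ∪
      ((fun p => r • p + mk2 0 (1 - r)) '' K) ∪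
      ((fun p => r • p + mk2 (1 - r) (1 - r)) '' K) ∪
      ((fun p => r • rot45 p + mk2 (1 / 2) (1 / 2 - (Real.sqrt 2 / 2) * r)) '' K) := by
  have hmk : mk2 0 0 = 0 := by ext i; fin_cases i <;> rfl
  unfold hutchinson cornerMap rotMap
  simp only [biUnion_insert, biUnion_singleton, union_assoc, mul_zero, mul_one, hmk, add_zero]

lemma subset_unitSq_of_hutchinson_eq {r : ℝ} (hr0 : 0 < r) (hr : r < 1 / 2) {K : Set ℝ²}
    (hK : hutchinson r K = K) (hKb : Bornology.IsBounded K) : K ⊆ unitSq := by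
  obtain ⟨R, hR⟩ := hKb.subset_closedBall 0
  have hcover : ∀ _ : Unit, ∀ x ∈ K, ∃ _ : Unit, ∃ f : ℝ² → ℝ²,
      (∀ y z, dist (f y) (f z) ≤ r * dist y z) ∧ x ∈ f '' K ∧ MapsTo f unitSq unitSq := by
    intro _ x hx
    rw [← hK] at hx
    rcases mem_hutchinson.1 hx with ⟨b, hb, a, ha, y, hy, rfl⟩ | ⟨y, hy, rfl⟩
    · exact ⟨(), _, fun y z => (dist_cornerMap hr0.le a b y z).le, mem_image_of_mem _ hy,
        mapsTo_cornerMap hr0.le (by linarith) (pair_subset_Icc ha) (pair_subset_Icc hb)⟩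
    · exact ⟨(), _, fun y z => (dist_rotMap hr0.le y z).le, mem_image_of_mem _ hy,
        mapsTo_rotMap hr0.le hr.le⟩
  simpa [isClosed_unitSq.closure_eq] using
    subset_closure_of_forall_mem_image_contraction (I := fun _ : Unit => K)
      (A := fun _ => unitSq) hr0.le (by linarith) (fun _ x hx => ⟨0, zero_mem_unitSq, hR hx⟩)
      hcover ()

lemma abs_inner_sub_le_of_mem_hutchinson {r : ℝ} (hr : 0 ≤ r) {K : Set ℝ²} (hKsq : K ⊆ unitSq)
    {x : ℝ²} (hx : x ∈ hutchinson r K) (v : ℝ²) :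
    (∃ a ∈ ({0, 1} : Set ℝ), ∃ b ∈ ({0, 1} : Set ℝ),
      |inner ℝ v x - inner ℝ v sqCenter - (1 - r) * (v 0 * (a - 1 / 2) + v 1 * (b - 1 / 2))| ≤
        r * shadowRadius v) ∨
    |inner ℝ v x - inner ℝ v sqCenter| ≤ r * shadowRadius (rot45Adjoint v) := by
  rcases mem_hutchinson.1 hx with ⟨b, hb, a, ha, y, hy, rfl⟩ | ⟨y, hy, rfl⟩
  · refine Or.inl ⟨a, ha, b, hb, ?_⟩
    rw [inner_cornerMap_sub, add_sub_cancel_right, abs_mul, abs_of_nonneg hr]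
    exact mul_le_mul_of_nonneg_left (abs_inner_sub_inner_sqCenter_le (hKsq hy) v) hr
  · right
    rw [inner_rotMap_sub, abs_mul, abs_of_nonneg hr]
    exact mul_le_mul_of_nonneg_left (abs_inner_sub_inner_sqCenter_le (hKsq hy) _) hr

lemma image_inner_ne_of_lt_one_third {r : ℝ} (hr0 : 0 < r) (hr3 : r < 1 / 3) {K : Set ℝ²}
    (hK : hutchinson r K = K) (hKsq : K ⊆ unitSq) :
    inner ℝ (mk2 1 1) '' K ≠ inner ℝ (mk2 1 1) '' unitSq := by
  intro h
  have hp : mk2 ((1 + r) / 4) ((1 + r) / 4) ∈ unitSq := by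
    intro i; fin_cases i <;> constructor <;> simp <;> linarith
  obtain ⟨x, hx, hxp⟩ := h ▸ mem_image_of_mem (inner ℝ (mk2 1 1)) hp
  rw [← hK] at hx
  rcases abs_inner_sub_le_of_mem_hutchinson hr0.le hKsq hx (mk2 1 1) with ⟨a, ha, b, hb, h⟩ | h
    <;> simp only [hxp, inner_eq_fin_two, shadowRadius, rot45Adjoint, sqCenter, mk2_apply_zero,
      mk2_apply_one] at h
  · rcases ha with rfl | rfl <;> rcases hb with rfl | rfl <;> norm_num at h <;>
      linarith [abs_le.1 h]
  · norm_num [abs_of_pos (Real.sqrt_pos.2 two_pos)] at h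
    nlinarith [(abs_le.1 h).1, sqrt_two_le_two]

/-- `u` is a point of the shadow of `[0,1]²` in direction `(c, s)`, measured from the shadow of
the centre; the alternatives are the shadows of the corner squares and of the diamond. The
reductions `(c, s, u) ↦ (-c, -s, -u)`, `c ↔ s`, `c ↦ -c`, `s ↦ -s` are symmetries of the square;
in the remaining case `0 ≤ s ≤ c`, `0 ≤ u`, the diamond and the corners `(1,0)` and `(1,1)` cover
`[0, (c + s) / 2]`, each overlap amounting to `3 r ≥ 1`. -/
lemma exists_corner_or_abs_le {r c s u : ℝ} (hr : 1 / 3 ≤ r) (hu : |u| ≤ (|c| + |s|) / 2) :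
    (∃ a ∈ ({0, 1} : Set ℝ), ∃ b ∈ ({0, 1} : Set ℝ),
      |u - (1 - r) * (c * (a - 1 / 2) + s * (b - 1 / 2))| ≤ r * ((|c| + |s|) / 2)) ∨
    |u| ≤ r * max |c| |s| / 2 := by
  wlog hu0 : 0 ≤ u generalizing c s u
  · rcases this (c := -c) (s := -s) (u := -u) (by simpa using hu) (by linarith)
      with ⟨a, ha, b, hb, h⟩ | h
    · refine Or.inl ⟨a, ha, b, hb, ?_⟩
      rw [← abs_neg]
      convert h using 2
      · ring
      · simp only [abs_neg]
    · right; simpa using h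
  wlog hsc : |s| ≤ |c| generalizing c s
  · rcases this (c := s) (s := c) (by linarith) (by linarith) with ⟨a, ha, b, hb, h⟩ | h
    · exact Or.inl ⟨b, hb, a, ha, by rwa [add_comm |c|, add_comm (c * _)]⟩
    · right; rwa [max_comm]
  wlog hc : 0 ≤ c generalizing c
  · rcases this (c := -c) (by simpa using hu) (by simpa using hsc) (by linarith)
      with ⟨a, ha, b, hb, h⟩ | h
    · refine Or.inl ⟨1 - a, one_sub_mem_pair ha, b, hb, ?_⟩
      convert h using 3
      · ring
      · simp only [abs_neg]
    · right; simpa using h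
  wlog hs : 0 ≤ s generalizing s
  · rcases this (s := -s) (by simpa using hu) (by simpa using hsc) (by linarith)
      with ⟨a, ha, b, hb, h⟩ | h
    · refine Or.inl ⟨a, ha, 1 - b, one_sub_mem_pair hb, ?_⟩
      convert h using 3
      · ring
      · simp only [abs_neg]
    · right; simpa using h
  rw [abs_of_nonneg hu0, abs_of_nonneg hc, abs_of_nonneg hs] at *
  have h3r : 0 ≤ 3 * r - 1 := by linarith
  rcases le_total u (r * c / 2) with h1 | h1
  · right; rwa [max_eq_left hsc]
  left
  rcases le_total u ((c - s) / 2 + r * s) with h2 | h2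
  · refine ⟨1, by simp, 0, by simp, abs_le.2 ⟨?_, ?_⟩⟩ <;> nlinarith [mul_nonneg hc h3r]
  · refine ⟨1, by simp, 1, by simp, abs_le.2 ⟨?_, ?_⟩⟩ <;>
      nlinarith [mul_nonneg hs h3r, mul_nonneg (sub_nonneg.2 hsc) (by linarith : (0 : ℝ) ≤ r)]

lemma exists_contraction_of_abs_sub_le_shadowRadius {r : ℝ} (hr3 : 1 / 3 ≤ r) {K : Set ℝ²}
    (hK : hutchinson r K = K) {e : ℝ²} {t : ℝ}
    (ht : |t - inner ℝ e sqCenter| ≤ shadowRadius e) :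
    ∃ e' ∈ ({e, rot45Adjoint e} : Set ℝ²), ∃ f : ℝ → ℝ,
      (∀ y z, dist (f y) (f z) ≤ r * dist y z) ∧
      t ∈ f '' Metric.closedBall (inner ℝ e' sqCenter) (shadowRadius e') ∧
      MapsTo f (inner ℝ e' '' K) (inner ℝ e '' K) := by
  have hr0 : 0 < r := by linarith
  set m := inner ℝ e sqCenter with hm
  rcases exists_corner_or_abs_le hr3 ht with ⟨a, ha, b, hb, h⟩ | h
  · set σ := e 0 * (a - 1 / 2) + e 1 * (b - 1 / 2) with hσ
    refine ⟨e, Or.inl rfl, fun τ => m + (1 - r) * σ + r * (τ - m),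
      fun y z => (dist_affine hr0.le _ _ y z).le,
      mem_image_affine_closedBall hr0 (by rwa [sub_add_eq_sub_sub]), ?_⟩
    rintro _ ⟨x, hx, rfl⟩
    refine ⟨cornerMap r a b x, hK ▸ mem_hutchinson.2 (Or.inl ⟨b, hb, a, ha, x, hx, rfl⟩), ?_⟩
    rw [hm, hσ]
    linear_combination inner_cornerMap_sub e r a b x
  · refine ⟨rot45Adjoint e, Or.inr rfl, fun τ => m + r * (τ - inner ℝ (rot45Adjoint e) sqCenter),
      fun y z => (dist_affine hr0.le _ _ y z).le, mem_image_affine_closedBall hr0 (h.trans ?_), ?_⟩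
    · rw [mul_div_assoc]
      exact mul_le_mul_of_nonneg_left (max_abs_le_shadowRadius_rot45Adjoint e) hr0.le
    rintro _ ⟨x, hx, rfl⟩
    refine ⟨rotMap r x, hK ▸ mem_hutchinson.2 (Or.inr ⟨x, hx, rfl⟩), ?_⟩
    rw [hm]
    linear_combination inner_rotMap_sub e r x

lemma image_inner_eq_of_hutchinson_eq {r : ℝ} (hr3 : 1 / 3 ≤ r) (hr1 : r < 1) {K : Set ℝ²}
    (hK : hutchinson r K = K) (hKne : K.Nonempty) (hKc : IsCompact K) (hKsq : K ⊆ unitSq)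
    {d : ℝ²} (hd : ‖d‖ = 1) : inner ℝ d '' K = inner ℝ d '' unitSq := by
  obtain ⟨x, hx⟩ := hKne
  have hbase : ∀ e : Metric.sphere (0 : ℝ²) 1,
      ∀ t ∈ Metric.closedBall (inner ℝ (e : ℝ²) sqCenter) (shadowRadius e),
      ∃ a ∈ inner ℝ (e : ℝ²) '' K, dist t a ≤ 2 := by
    rintro ⟨e, he⟩ t ht
    refine ⟨_, mem_image_of_mem _ hx, ?_⟩
    have hxe := abs_inner_sub_inner_sqCenter_le (hKsq hx) e
    have he1 := shadowRadius_le_one (mem_sphere_zero_iff_norm.1 he)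
    rw [Metric.mem_closedBall] at ht
    rw [← Real.dist_eq] at hxe
    linarith [dist_triangle_right t (inner ℝ e x) (inner ℝ e sqCenter)]
  have hcover : ∀ e : Metric.sphere (0 : ℝ²) 1,
      ∀ t ∈ Metric.closedBall (inner ℝ (e : ℝ²) sqCenter) (shadowRadius e),
      ∃ e' : Metric.sphere (0 : ℝ²) 1, ∃ f : ℝ → ℝ, (∀ y z, dist (f y) (f z) ≤ r * dist y z) ∧
        t ∈ f '' Metric.closedBall (inner ℝ (e' : ℝ²) sqCenter) (shadowRadius e') ∧
        MapsTo f (inner ℝ (e' : ℝ²) '' K) (inner ℝ (e : ℝ²) '' K) := by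
    rintro ⟨e, he⟩ t ht
    rw [Metric.mem_closedBall, Real.dist_eq] at ht
    obtain ⟨e', he', hf⟩ := exists_contraction_of_abs_sub_le_shadowRadius hr3 hK ht
    have he'1 : e' ∈ Metric.sphere (0 : ℝ²) 1 := by
      rcases he' with rfl | rfl
      · exact he
      · simpa [norm_rot45Adjoint] using he
    exact ⟨⟨e', he'1⟩, hf⟩
  refine (image_mono hKsq).antisymm ?_
  calc inner ℝ d '' unitSq ⊆ Metric.closedBall (inner ℝ d sqCenter) (shadowRadius d) := by
        rintro _ ⟨p, hp, rfl⟩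
        exact abs_inner_sub_inner_sqCenter_le hp d
    _ ⊆ closure (inner ℝ d '' K) :=
        subset_closure_of_forall_mem_image_contraction (by linarith) hr1 hbase hcover
          ⟨d, mem_sphere_zero_iff_norm.2 hd⟩
    _ = inner ℝ d '' K := (hKc.image (continuous_const.inner continuous_id)).isClosed.closure_eq

lemma image_orthProj_span_eq_iff {v : ℝ²} (hv : v ≠ 0) {S T : Set ℝ²} :
    orthProj (Submodule.span ℝ {v}) '' S = orthProj (Submodule.span ℝ {v}) '' T ↔
      inner ℝ v '' S = inner ℝ v '' T := by
  have hproj : orthProj (Submodule.span ℝ {v}) = (fun t : ℝ => (t / ‖v‖ ^ 2) • v) ∘ inner ℝ v := by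
    ext1 x
    rw [orthProj, ← Submodule.starProjection_apply, Submodule.starProjection_singleton]
    rfl
  have hinj : Function.Injective fun t : ℝ => (t / ‖v‖ ^ 2) • v := by
    intro s t hst
    have hn : ‖v‖ ^ 2 ≠ 0 := pow_ne_zero 2 (norm_ne_zero_iff.2 hv)
    simpa [hn] using smul_left_injective ℝ hv hst
  rw [hproj, image_comp, image_comp, hinj.image_injective.eq_iff]

lemma exists_norm_eq_one_span_eq {W : Submodule ℝ ℝ²} (hW : finrank ℝ W = 1) :
    ∃ u : ℝ², ‖u‖ = 1 ∧ Submodule.span ℝ {u} = W := by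
  obtain ⟨v, hvW, hv⟩ := Submodule.exists_mem_ne_zero_of_ne_bot
    (fun h => by subst h; simp at hW : W ≠ ⊥)
  have hspan : Submodule.span ℝ {v} = W :=
    Submodule.eq_of_le_of_finrank_le ((Submodule.span_singleton_le_iff_mem v W).2 hvW)
      (by rw [hW, finrank_span_singleton hv])
  refine ⟨‖v‖⁻¹ • v, norm_smul_inv_norm hv, ?_⟩
  rw [Submodule.span_singleton_smul_eq (inv_ne_zero (norm_ne_zero_iff.2 hv)).isUnit, hspan]

/-- The "rotated square in the middle" self-similar set has very thick shadows in every
direction iff `r ≥ 1/3`. -/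
theorem rotatedSquare_veryThickShadows_iff
    (r : ℝ) (hr0 : 0 < r) (hr : r < 1 / 2)
    (K : Set (EuclideanSpace ℝ (Fin 2))) (hKne : K.Nonempty) (hKcpt : IsCompact K)
    (hKattr : K =
      ((fun p => r • p) '' K) ∪
      ((fun p => r • p + mk2 (1 - r) 0) '' K) ∪
      ((fun p => r • p + mk2 0 (1 - r)) '' K) ∪
      ((fun p => r • p + mk2 (1 - r) (1 - r)) '' K) ∪
      ((fun p => r • rot45 p + mk2 (1 / 2) (1 / 2 - (Real.sqrt 2 / 2) * r)) '' K)) :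
    (∀ (W : Submodule ℝ (EuclideanSpace ℝ (Fin 2))), finrank ℝ W = 1 →
      orthProj W '' K = orthProj W '' unitSq) ↔
    1 / 3 ≤ r := by
  have hK : hutchinson r K = K := (hutchinson_eq r K).trans hKattr.symm
  have hKsq : K ⊆ unitSq := subset_unitSq_of_hutchinson_eq hr0 hr hK hKcpt.isBounded
  constructor
  · intro hthick
    by_contra! hr3
    have hv : mk2 1 1 ≠ 0 := fun h => by simpa using congrArg (· 0) h
    exact image_inner_ne_of_lt_one_third hr0 hr3 hK hKsq
      ((image_orthProj_span_eq_iff hv).1 (hthick _ (finrank_span_singleton hv)))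
  · rintro hr3 W hW
    obtain ⟨u, hu, rfl⟩ := exists_norm_eq_one_span_eq hW
    rw [image_orthProj_span_eq_iff (norm_ne_zero_iff.1 (hu ▸ one_ne_zero))]
    exact image_inner_eq_of_hutchinson_eq hr3 (by linarith) hK hKne hKcpt hKsq hu
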